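/- For every positive integer n, 0 ≤ n(n+2)/3 - G(n) ≤ ⌊log₂ n⌋ / 3. -/

import Mathlib

open Finset

/-- The largest odd divisor of `k`. -/
def oddPart (k : ℕ) : ℕ := ordCompl[2] k

/-- `V n = ∑_{k=1}^n α(k)/k` as a rational number. -/
def V (n : ℕ) : ℚ := ∑ k ∈ Finset.Icc 1 n, (oddPart k : ℚ) / k

/-- `v n = V n - 2n/3`. -/
def v (n : ℕ) : ℚ := V n - 2 * n / 3

/-- `U n = ∑_{k=1}^n α(k)`. -/
def U (n : ℕ) : ℕ := ∑ k ∈ Finset.Icc 1 n, oddPart k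

/-- `G n = ∑_{k=1}^n (n+1-k)·α(k)/k` as a rational number. -/
def G (n : ℕ) : ℚ := ∑ k ∈ Finset.Icc 1 n, ((n : ℚ) + 1 - k) * (oddPart k : ℚ) / k

/-- `g n = n(n+2)/3 - G n`. -/
def g (n : ℕ) : ℚ := n * (n + 2) / 3 - G n

/-!
In `V n` the terms with odd `k` equal `1` and those with even `k = 2j` equal `α(j)/(2j)`, so
`V (2n) = n + V n / 2` and `V (2n+1) = V (2n) + 1`. Hence `v (2n) = v n / 2` and
`v (2n+1) = v n / 2 + 1/3`, which keeps `v` in `[0, 2/3]`.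
Since `G (n+1) = G n + V (n+1)`, we get `g (n+1) = g n + 1/3 - v (n+1)`, and from this
`g (2n+1) = g n` and `g (2n) = g n + v n / 2`: every binary digit of `n` adds between `0` and
`1/3` to `g n`.
-/

lemma oddPart_two_mul (k : ℕ) : oddPart (2 * k) = oddPart k := by
  simpa [oddPart] using Nat.ordCompl_self_pow_mul k 1 Nat.prime_two

lemma oddPart_of_odd {k : ℕ} (hk : Odd k) : oddPart k = k :=
  (Nat.ordCompl_eq_self_iff_zero_or_not_dvd k Nat.prime_two).mpr
    (Or.inr (Nat.two_dvd_ne_zero.mpr (Nat.odd_iff.mp hk)))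

lemma oddPart_div_two_mul_add_one (n : ℕ) :
    (oddPart (2 * n + 1) : ℚ) / ((2 * n + 1 : ℕ) : ℚ) = 1 := by
  rw [oddPart_of_odd (odd_two_mul_add_one n), div_self (by positivity)]

lemma oddPart_div_two_mul (n : ℕ) :
    (oddPart (2 * n) : ℚ) / ((2 * n : ℕ) : ℚ) = (oddPart n : ℚ) / n / 2 := by
  rw [oddPart_two_mul, div_div]
  push_cast
  ring

lemma V_succ (n : ℕ) : V (n + 1) = V n + (oddPart (n + 1) : ℚ) / ((n + 1 : ℕ) : ℚ) := by
  rw [V, sum_Icc_succ_top (by omega), V]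

lemma V_two_mul_add_one (n : ℕ) : V (2 * n + 1) = V (2 * n) + 1 := by
  rw [V_succ, oddPart_div_two_mul_add_one]

lemma V_two_mul (n : ℕ) : V (2 * n) = n + V n / 2 := by
  induction n with
  | zero => simp [V]
  | succ n ih =>
    rw [show 2 * (n + 1) = 2 * n + 1 + 1 by ring, V_succ, V_two_mul_add_one, ih,
      show 2 * n + 1 + 1 = 2 * (n + 1) by ring, oddPart_div_two_mul, V_succ n]
    push_cast
    ring

lemma v_two_mul (n : ℕ) : v (2 * n) = v n / 2 := by
  rw [v, v, V_two_mul]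
  push_cast
  ring

lemma v_two_mul_add_one (n : ℕ) : v (2 * n + 1) = v n / 2 + 1 / 3 := by
  rw [v, v, V_two_mul_add_one, V_two_mul]
  push_cast
  ring

lemma v_mem_Icc (n : ℕ) : v n ∈ Set.Icc 0 (2 / 3) := by
  induction n using Nat.evenOddRec with
  | h0 => norm_num [v, V]
  | h_even n ih =>
    rw [v_two_mul]
    constructor <;> linarith [ih.1, ih.2]
  | h_odd n ih =>
    rw [v_two_mul_add_one]
    constructor <;> linarith [ih.1, ih.2]

lemma G_succ (n : ℕ) : G (n + 1) = G n + V (n + 1) := by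
  rw [G, sum_Icc_succ_top (by omega), V_succ, G, V, ← add_assoc, ← sum_add_distrib]
  congr 1
  · refine sum_congr rfl fun k _ => ?_
    push_cast
    ring
  · push_cast
    ring

lemma g_succ (n : ℕ) : g (n + 1) = g n + 1 / 3 - v (n + 1) := by
  rw [g, g, v, G_succ]
  push_cast
  ring

lemma g_two_mul (n : ℕ) : g (2 * n) = g n + v n / 2 := by
  induction n with
  | zero => simp [g, G, v, V]
  | succ n ih =>
    rw [show 2 * (n + 1) = 2 * n + 1 + 1 by ring, g_succ, g_succ, ih, v_two_mul_add_one,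
      show 2 * n + 1 + 1 = 2 * (n + 1) by ring, v_two_mul, g_succ n]
    ring

lemma g_two_mul_add_one (n : ℕ) : g (2 * n + 1) = g n := by
  rw [g_succ, g_two_mul, v_two_mul_add_one]
  ring

lemma g_mem_Icc (n : ℕ) : g n ∈ Set.Icc 0 ((Nat.log 2 n : ℚ) / 3) := by
  induction n using Nat.evenOddRec with
  | h0 => simp [g, G]
  | h_even n ih =>
    rcases Nat.eq_zero_or_pos n with rfl | hn
    · simp [g, G]
    have hlog : Nat.log 2 (2 * n) = Nat.log 2 n + 1 := by
      rw [mul_comm, Nat.log_mul_base one_lt_two hn.ne']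
    rw [g_two_mul, hlog]
    push_cast
    constructor <;> linarith [ih.1, ih.2, (v_mem_Icc n).1, (v_mem_Icc n).2]
  | h_odd n ih =>
    have hlog : (Nat.log 2 n : ℚ) ≤ Nat.log 2 (2 * n + 1) :=
      Nat.cast_le.mpr (Nat.log_mono_right (by omega))
    rw [g_two_mul_add_one]
    constructor <;> linarith [ih.1, ih.2]

theorem stmt16_general (n : ℕ) :
    0 ≤ (n : ℚ) * (n + 2) / 3 - G n ∧
      (n : ℚ) * (n + 2) / 3 - G n ≤ (Nat.log 2 n : ℚ) / 3 :=
  g_mem_Icc n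

theorem stmt16 (n : ℕ) (hn : 0 < n) :
    0 ≤ (n : ℚ) * (n + 2) / 3 - G n ∧
      (n : ℚ) * (n + 2) / 3 - G n ≤ (Nat.log 2 n : ℚ) / 3 :=
  stmt16_general n
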